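/- arXiv:1602.00314 — 2 statements merged into one kernel-verified Lean document; each statement's English description precedes it below -/
import Mathlib

section
/- Let f(X) = a_0 X^n + a_1 X^{n-1} + ... + a_n be a complex polynomial with a_0 ≠ 0. Then every complex root z of f satisfies |z| ≤ (2^{1/n} - 1)^{-1} · max_{1 ≤ k ≤ n} |a_k / (a_0 · binom(n,k))|^{1/k}. -/
/-!
Put `M = max_k |a_k / (a_0 binom(n,k))|^{1/k}`, so that `|a_k| ≤ |a_0| binom(n,k) M^k`. For a root
`z`, moving `a_0 z^n` to one side and applying the triangle inequality bounds
`|a_0| |z|^n` by `|a_0| Σ_{k ≥ 1} binom(n,k) M^k |z|^{n-k} = |a_0| ((M + |z|)^n - |z|^n)`.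
Hence `2 |z|^n ≤ (M + |z|)^n`, i.e. `2^{1/n} |z| ≤ M + |z|`, which rearranges to the bound.
-/

open Finset

theorem Finset.sum_range_succ_eq_add_sum_Icc {M : Type*} [AddCommMonoid M] (f : ℕ → M) (n : ℕ) :
    ∑ i ∈ range (n + 1), f i = f 0 + ∑ i ∈ Icc 1 n, f i := by
  rw [range_eq_Ico, sum_eq_sum_Ico_succ_bot n.add_one_pos, zero_add,
    Ico_add_one_right_eq_Icc]

theorem sum_Icc_pow_mul_pow_mul_choose {R : Type*} [CommRing R] (x y : R) (n : ℕ) :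
    ∑ k ∈ Icc 1 n, x ^ k * y ^ (n - k) * n.choose k = (x + y) ^ n - y ^ n := by
  rw [add_pow, sum_range_succ_eq_add_sum_Icc]
  simp

theorem Real.rpow_one_div_mul_le_of_mul_pow_le {n : ℕ} (hn : n ≠ 0) {c A B : ℝ} (hc : 0 ≤ c)
    (hA : 0 ≤ A) (hB : 0 ≤ B) (h : c * A ^ n ≤ B ^ n) : c ^ ((1 : ℝ) / n) * A ≤ B := by
  rwa [← pow_le_pow_iff_left₀ (by positivity) hB hn, mul_pow, one_div,
    Real.rpow_inv_natCast_pow hc hn]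

section NormedField

variable {𝕜 : Type*} [NormedField 𝕜]

theorem norm_le_norm_mul_pow_of_norm_div_rpow_le {x y : 𝕜} (hy : y ≠ 0) {k : ℕ} (hk : k ≠ 0)
    {M : ℝ} (h : ‖x / y‖ ^ ((1 : ℝ) / k) ≤ M) : ‖x‖ ≤ ‖y‖ * M ^ k := by
  have hxy : ‖x / y‖ ≤ M ^ k := by
    simpa only [one_div, Real.rpow_inv_natCast_pow (norm_nonneg _) hk] using
      pow_le_pow_left₀ (by positivity) h k
  rwa [norm_div, div_le_iff₀ (norm_pos_iff.mpr hy), mul_comm] at hxy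

theorem norm_mul_pow_le_sum_of_sum_eq_zero {n : ℕ} {a : ℕ → 𝕜} {z : 𝕜}
    (hz : ∑ i ∈ range (n + 1), a i * z ^ (n - i) = 0) :
    ‖a 0‖ * ‖z‖ ^ n ≤ ∑ k ∈ Icc 1 n, ‖a k‖ * ‖z‖ ^ (n - k) := by
  rw [sum_range_succ_eq_add_sum_Icc, Nat.sub_zero, add_eq_zero_iff_eq_neg] at hz
  calc ‖a 0‖ * ‖z‖ ^ n = ‖∑ k ∈ Icc 1 n, a k * z ^ (n - k)‖ := by
        rw [← norm_pow, ← norm_mul, hz, norm_neg]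
    _ ≤ ∑ k ∈ Icc 1 n, ‖a k * z ^ (n - k)‖ := norm_sum_le _ _
    _ = ∑ k ∈ Icc 1 n, ‖a k‖ * ‖z‖ ^ (n - k) := by simp only [norm_mul, norm_pow]

theorem two_mul_norm_pow_le_add_pow_of_sum_eq_zero {n : ℕ} {a : ℕ → 𝕜} (ha : a 0 ≠ 0) {M : ℝ}
    (hM : ∀ k ∈ Icc 1 n, ‖a k‖ ≤ ‖a 0‖ * n.choose k * M ^ k) {z : 𝕜}
    (hz : ∑ i ∈ range (n + 1), a i * z ^ (n - i) = 0) :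
    2 * ‖z‖ ^ n ≤ (M + ‖z‖) ^ n := by
  have hsum : ‖a 0‖ * ‖z‖ ^ n ≤ ‖a 0‖ * ((M + ‖z‖) ^ n - ‖z‖ ^ n) :=
    calc ‖a 0‖ * ‖z‖ ^ n ≤ ∑ k ∈ Icc 1 n, ‖a k‖ * ‖z‖ ^ (n - k) :=
          norm_mul_pow_le_sum_of_sum_eq_zero hz
      _ ≤ ∑ k ∈ Icc 1 n, ‖a 0‖ * n.choose k * M ^ k * ‖z‖ ^ (n - k) :=
          sum_le_sum fun k hk => mul_le_mul_of_nonneg_right (hM k hk) (by positivity)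
      _ = ‖a 0‖ * ∑ k ∈ Icc 1 n, M ^ k * ‖z‖ ^ (n - k) * n.choose k := by
          rw [mul_sum]
          exact sum_congr rfl fun k _ => by ring
      _ = ‖a 0‖ * ((M + ‖z‖) ^ n - ‖z‖ ^ n) := by rw [sum_Icc_pow_mul_pow_mul_choose]
  have := le_of_mul_le_mul_left hsum (norm_pos_iff.mpr ha)
  linarith

end NormedField

theorem root_bound_marden (n : ℕ) (hn : 1 ≤ n) (a : ℕ → ℂ) (ha : a 0 ≠ 0)
    (z : ℂ) (hz : ∑ i ∈ Finset.range (n + 1), a i * z ^ (n - i) = 0) :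
    ‖z‖ ≤ ((2 : ℝ) ^ ((1 : ℝ) / n) - 1)⁻¹ *
      (Finset.Icc 1 n).sup' (Finset.nonempty_Icc.mpr hn)
        (fun k => ‖a k / (a 0 * (n.choose k : ℂ))‖ ^ ((1 : ℝ) / k)) := by
  set f : ℕ → ℝ := fun k => ‖a k / (a 0 * (n.choose k : ℂ))‖ ^ ((1 : ℝ) / k)
  set M := (Icc 1 n).sup' (nonempty_Icc.mpr hn) f
  have hM0 : 0 ≤ M :=
    (Real.rpow_nonneg (norm_nonneg _) _).trans (le_sup' f (mem_Icc.mpr ⟨le_rfl, hn⟩))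
  have hM : ∀ k ∈ Icc 1 n, ‖a k‖ ≤ ‖a 0‖ * n.choose k * M ^ k := fun k hk => by
    have hchoose : (n.choose k : ℂ) ≠ 0 := by
      exact_mod_cast (Nat.choose_pos (mem_Icc.mp hk).2).ne'
    simpa only [norm_mul, Complex.norm_natCast] using
      norm_le_norm_mul_pow_of_norm_div_rpow_le (mul_ne_zero ha hchoose)
        (Nat.one_le_iff_ne_zero.mp (mem_Icc.mp hk).1) (le_sup' f hk)
  have hroot : (2 : ℝ) ^ ((1 : ℝ) / n) * ‖z‖ ≤ M + ‖z‖ :=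
    Real.rpow_one_div_mul_le_of_mul_pow_le (by omega) zero_le_two (norm_nonneg z)
      (by positivity) (two_mul_norm_pow_le_add_pow_of_sum_eq_zero ha hM hz)
  have hone_lt : 1 < (2 : ℝ) ^ ((1 : ℝ) / n) :=
    Real.one_lt_rpow one_lt_two (by positivity)
  rw [le_inv_mul_iff₀ (by linarith)]
  linarith
end

section
/- For n ≥ 5, every proper subgroup K of the alternating group A_n has index at least n; equivalently, max{ [A_n : K]^{-1} : K a proper subgroup of A_n } = 1/n. -/
open Equiv Nat

theorem Subgroup.card_le_factorial_index_of_ne_top {G : Type*} [Group G] [IsSimpleGroup G]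
    {K : Subgroup G} [K.FiniteIndex] (hK : K ≠ ⊤) : Nat.card G ≤ K.index ! := by
  -- `G` acts faithfully on `G ⧸ K`: the kernel is the normal core of `K`, which is `⊥` by simplicity.
  have hcore : K.normalCore = ⊥ :=
    K.normalCore_normal.eq_bot_or_eq_top.resolve_right fun h =>
      hK (top_le_iff.1 (h ▸ K.normalCore_le))
  have hinj : Function.Injective (MulAction.toPermHom G (G ⧸ K)) := by
    rw [← MonoidHom.ker_eq_bot_iff, ← Subgroup.normalCore_eq_ker, hcore]
  calc Nat.card G ≤ Nat.card (Perm (G ⧸ K)) := Nat.card_le_card_of_injective _ hinj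
    _ = K.index ! := by rw [Nat.card_perm, Subgroup.index]

theorem alternatingGroup.card_le_of_card_le_factorial {α : Type*} [Fintype α] [DecidableEq α]
    (h3 : 3 ≤ Nat.card α) {m : ℕ} (hm : Nat.card (alternatingGroup α) ≤ m !) :
    Nat.card α ≤ m := by
  by_contra! hlt
  have : Nontrivial α := Finite.one_lt_card_iff_nontrivial.1 (by omega)
  have hpos : 0 < (Nat.card α - 1)! := Nat.factorial_pos _
  have hmul : Nat.card α * (Nat.card α - 1)! ≤ 2 * (Nat.card α - 1)! :=
    calc Nat.card α * (Nat.card α - 1)! = (Nat.card α)! := Nat.mul_factorial_pred (by omega)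
      _ = 2 * Nat.card (alternatingGroup α) := by
        rw [two_mul_nat_card_alternatingGroup, Nat.card_perm]
      _ ≤ 2 * m ! := by omega
      _ ≤ 2 * (Nat.card α - 1)! := by gcongr; omega
  have := Nat.le_of_mul_le_mul_right hmul hpos
  omega

theorem alternating_group_minimal_index (n : ℕ) (hn : 5 ≤ n) :
    (∀ K : Subgroup (alternatingGroup (Fin n)), K ≠ ⊤ → n ≤ K.index) ∧
    (∃ K : Subgroup (alternatingGroup (Fin n)), K ≠ ⊤ ∧ K.index = n) := by
  have hcard : Nat.card (Fin n) = n := Nat.card_eq_fintype_card.trans (Fintype.card_fin n)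
  have := alternatingGroup.isSimpleGroup (α := Fin n) (by omega)
  have := alternatingGroup.isPretransitive_of_three_le_card (Fin n) (by omega)
  refine ⟨fun K hK => ?_, ?_⟩
  · simpa only [hcard] using alternatingGroup.card_le_of_card_le_factorial (by omega)
      (K.card_le_factorial_index_of_ne_top hK)
  · have hindex : (MulAction.stabilizer (alternatingGroup (Fin n)) (⟨0, by omega⟩ : Fin n)).index
        = n := by
      rw [MulAction.index_stabilizer_of_transitive, hcard]
    exact ⟨_, fun h => by rw [← Subgroup.index_eq_one, hindex] at h; omega, hindex⟩
end
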